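/- Let M and N be quantum channels such that M ≾_q N, i.e. R_{ρ_{ABX}}(M) ≤ R_{ρ_{ABX}}(N) for every quantum channel gambling game ρ_{ABX}. Then the maximal output purity of N dominates that of M: sup over input density matrices ρ of Tr[N(ρ)²] is at least sup over input density matrices ρ of Tr[M(ρ)²]. -/

import Mathlib

open Matrix Kronecker
open scoped ComplexOrder

noncomputable section

open scoped Classical

/-- Square complex matrices of size `n`. -/
abbrev Mat (n : ℕ) := Matrix (Fin n) (Fin n) ℂ

/-- Bipartite matrices on `ℂ^a ⊗ ℂ^b`. -/
abbrev BMat (a b : ℕ) := Matrix (Fin a × Fin b) (Fin a × Fin b) ℂ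

/-- A density matrix: positive semidefinite with trace one. -/
def IsDensity {ι : Type} [Fintype ι] (ρ : Matrix ι ι ℂ) : Prop :=
  ρ.PosSemidef ∧ ρ.trace = 1

/-- The maximally mixed state `I/n`. -/
def uMat (n : ℕ) : Mat n := (n : ℂ)⁻¹ • 1

/-- Choi matrix of a map on matrices. -/
def choi {ι κ : Type} [Fintype ι] [DecidableEq ι]
    (Φ : Matrix ι ι ℂ → Matrix κ κ ℂ) : Matrix (ι × κ) (ι × κ) ℂ :=
  fun p q => Φ (Matrix.single p.1 q.1 1) p.2 q.2

/-- Quantum channel: linear, trace preserving, completely positive map. -/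
def IsCPTP {ι κ : Type} [Fintype ι] [DecidableEq ι] [Fintype κ]
    (Φ : Matrix ι ι ℂ → Matrix κ κ ℂ) : Prop :=
  IsLinearMap ℂ Φ ∧ (∀ X, (Φ X).trace = X.trace) ∧ (choi Φ).PosSemidef

/-- Completely positive (not necessarily trace-preserving) map. -/
def IsCP {ι κ : Type} [Fintype ι] [DecidableEq ι] [Fintype κ]
    (Φ : Matrix ι ι ℂ → Matrix κ κ ℂ) : Prop :=
  IsLinearMap ℂ Φ ∧ (choi Φ).PosSemidef

/-- Partial trace over the first tensor factor. -/
def ptraceA {α β : Type} [Fintype α] (M : Matrix (α × β) (α × β) ℂ) :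
    Matrix β β ℂ := fun j j' => ∑ i, M (i, j) (i, j')

/-- Partial trace over the second tensor factor. -/
def ptraceB {α β : Type} [Fintype β] (M : Matrix (α × β) (α × β) ℂ) :
    Matrix α α ℂ := fun i i' => ∑ j, M (i, j) (i', j)

/-- The map `Φ ⊗ id` acting on the first tensor factor. -/
def lTensorId {α α' β : Type} (Φ : Matrix α α ℂ → Matrix α' α' ℂ)
    (X : Matrix (α × β) (α × β) ℂ) : Matrix (α' × β) (α' × β) ℂ :=
  fun p q => Φ (fun k k' => X (k, p.2) (k', q.2)) p.1 q.1

/-- The map `id ⊗ Φ` acting on the second tensor factor. -/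
def rTensorId {α β β' : Type} (Φ : Matrix β β ℂ → Matrix β' β' ℂ)
    (X : Matrix (α × β) (α × β) ℂ) : Matrix (α × β') (α × β') ℂ :=
  fun p q => Φ (fun k k' => X (p.1, k) (q.1, k')) p.2 q.2

/-- `A ↛ B'` semi-causality of a bipartite channel. -/
def SemiCausal {a b b' : ℕ} (N : BMat a b → BMat a b') : Prop :=
  ∀ M : Mat a → Mat a, IsCPTP M →
    ∀ X : BMat a b, ptraceA (N (lTensorId M X)) = ptraceA (N X)

/-- Conditional unitality of a bipartite channel. -/
def CondUnital {a b b' : ℕ} (N : BMat a b → BMat a b') : Prop :=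
  ∀ ρ : Mat b, IsDensity ρ →
    ∃ σ : Mat b', IsDensity σ ∧ N (uMat a ⊗ₖ ρ) = uMat a ⊗ₖ σ

/-- Conditionally unital semi-causal channels. -/
def CUSC {a b b' : ℕ} (N : BMat a b → BMat a b') : Prop :=
  IsCPTP N ∧ CondUnital N ∧ SemiCausal N

/-- The channel `X ↦ V X V†` associated with a matrix `V`. -/
def isomChannel {a a' : ℕ} (V : Matrix (Fin a') (Fin a) ℂ) (X : Mat a) : Mat a' :=
  V * X * Vᴴ

/-- Conditional majorization `σ ≾_A ρ`. -/
def CondMajor {a' b' a b : ℕ} (σ : BMat a' b') (ρ : BMat a b) : Prop :=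
  (a ≤ a' ∧ ∃ V : Matrix (Fin a') (Fin a) ℂ, Vᴴ * V = 1 ∧
      ∃ N : BMat a b → BMat a b', CUSC N ∧ σ = lTensorId (isomChannel V) (N ρ)) ∨
  (a' ≤ a ∧ ∃ U : Matrix (Fin a) (Fin a') ℂ, Uᴴ * U = 1 ∧
      ∃ N : BMat a b → BMat a b', CUSC N ∧ lTensorId (isomChannel U) σ = N ρ)

/-- The tensor product `ρ_{AB} ⊗ τ_{A'B'}` regrouped as a state on `(AA')(BB')`. -/
def prodState {a b a' b' : ℕ} (ρ : BMat a b) (τ : BMat a' b') :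
    BMat (a * a') (b * b') := fun p q =>
  ρ ((finProdFinEquiv.symm p.1).1, (finProdFinEquiv.symm p.2).1)
    ((finProdFinEquiv.symm q.1).1, (finProdFinEquiv.symm q.2).1) *
  τ ((finProdFinEquiv.symm p.1).2, (finProdFinEquiv.symm p.2).2)
    ((finProdFinEquiv.symm q.1).2, (finProdFinEquiv.symm q.2).2)

/-- A conditional entropy: a real function on bipartite density matrices of all
finite dimensions, monotone under conditional majorization, additive under tensor
products, and normalized to `1` on the one-qubit maximally mixed state. -/
structure CondEntropy where
  H : ∀ {a b : ℕ}, BMat a b → ℝ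
  mono : ∀ {a b a' b' : ℕ} (ρ : BMat a b) (σ : BMat a' b'),
    IsDensity ρ → IsDensity σ → CondMajor σ ρ → H ρ ≤ H σ
  additive : ∀ {a b a' b' : ℕ} (ρ : BMat a b) (τ : BMat a' b'),
    IsDensity ρ → IsDensity τ → H (prodState ρ τ) = H ρ + H τ
  normalized : H (uMat 2 ⊗ₖ (1 : Mat 1)) = 1

/-- Maximally entangled state `φ⁺` on `ℂ^d ⊗ ℂ^d`. -/
def maxEnt (d : ℕ) : BMat d d :=
  fun p q => if p.1 = p.2 ∧ q.1 = q.2 then (d : ℂ)⁻¹ else 0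

/-- The sum of the `k` largest values of `f`. -/
def sumTopK {ι : Type} [Fintype ι] [DecidableEq ι] (k : ℕ) (f : ι → ℝ) : ℝ :=
  (Finset.univ.powerset.filter fun s : Finset ι => s.card ≤ k).sup'
    ⟨∅, Finset.mem_filter.mpr ⟨Finset.mem_powerset.mpr (Finset.empty_subset _), by simp⟩⟩
    fun s => ∑ i ∈ s, f i

/-- Ky Fan `k`-norm (sum of the `k` largest eigenvalues) of a hermitian matrix. -/
def kyFan {ι : Type} [Fintype ι] [DecidableEq ι] (k : ℕ) (X : Matrix ι ι ℂ) : ℝ :=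
  if h : X.IsHermitian then sumTopK k h.eigenvalues else 0

/-- The rank-one projector `|v⟩⟨v|`. -/
def projv {n : ℕ} (v : Fin n → ℂ) : Mat n := fun i j => v i * star (v j)

/-- A rank-one projective measurement, given by an orthonormal family of vectors. -/
def IsRankOneMeas {n : ℕ} (u : Fin n → Fin n → ℂ) : Prop :=
  ∀ z z', (∑ i, star (u z i) * u z' i) = if z = z' then 1 else 0

/-- A column-stochastic matrix. -/
def ColStochastic {a c : ℕ} (T : Matrix (Fin a) (Fin c) ℝ) : Prop :=
  (∀ w z, 0 ≤ T w z) ∧ ∀ z, ∑ w, T w z = 1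

/-- Reward of the bipartite gambling game `(T, 0)` (no adversary). -/
def R0 {a b c : ℕ} (T : Matrix (Fin a) (Fin c) ℝ) (ρ : BMat a b) : ℝ :=
  ⨆ u : {u : Fin b → Fin b → ℂ // IsRankOneMeas u}, ⨆ f : Fin b → Fin c,
    ∑ z, ∑ w, T w (f z) *
      kyFan (w.1 + 1)
        (ptraceB (((1 : Mat a) ⊗ₖ projv (u.1 z)) * ρ * ((1 : Mat a) ⊗ₖ projv (u.1 z))))

/-- Reward of the bipartite gambling game `(T, p)`. -/
def Rgame {a b c : ℕ} (T : Matrix (Fin a) (Fin c) ℝ) (p : ℝ) (ρ : BMat a b) : ℝ :=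
  p * (⨅ v : {v : Fin a → Fin a → ℂ // IsRankOneMeas v},
        R0 T (∑ j, (projv (v.1 j) ⊗ₖ (1 : Mat b)) * ρ * (projv (v.1 j) ⊗ₖ (1 : Mat b)))) +
  (1 - p) * R0 T ρ

/-- Reward of a quantum-channel gambling game `ρ_{ABX} = Σ_x p_x ρ^{(x)}_{AB} ⊗ |x⟩⟨x|`
for a channel `N` with output system `A`. -/
def Rch {n m dA b ℓ : ℕ} (N : Mat n → Mat m)
    (p : Fin ℓ → ℝ) (ρx : Fin ℓ → BMat dA b) : ℝ :=
  ⨆ E : {E : Mat dA → Mat n // IsCPTP E},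
    ∑ x, p x * kyFan (x.1 + 1) (lTensorId (fun Y => N (E.1 Y)) (ρx x))

/-- The classical channel induced by a column-stochastic transition matrix. -/
def classicalChannel {x y : ℕ} (P : Matrix (Fin y) (Fin x) ℝ) : Mat x → Mat y :=
  fun ρ => Matrix.of fun i j => if i = j then ∑ k, (P i k : ℂ) * ρ k k else 0

/-- Classical game reward `Prob_T` of a classical channel with transition matrix `P`. -/
def ProbT {yd xd wn zn : ℕ} (P : Matrix (Fin yd) (Fin xd) ℝ)
    (T : Matrix (Fin wn) (Fin zn) ℝ) : ℝ :=
  ∑ z, ⨆ x : Fin xd, ∑ w, T w z * sumTopK (w.1 + 1) (fun i => P i x)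

/-- A joint probability matrix. -/
def JointProb {m n : ℕ} (P : Matrix (Fin m) (Fin n) ℝ) : Prop :=
  (∀ x y, 0 ≤ P x y) ∧ ∑ x, ∑ y, P x y = 1

/-- A row-stochastic matrix. -/
def RowStochastic {n n' : ℕ} (t : Matrix (Fin n) (Fin n') ℝ) : Prop :=
  (∀ y w, 0 ≤ t y w) ∧ ∀ y, ∑ w, t y w = 1

/-- A doubly stochastic matrix. -/
def IsDoublyStochastic {m : ℕ} (d : Matrix (Fin m) (Fin m) ℝ) : Prop :=
  (∀ i j, 0 ≤ d i j) ∧ (∀ i, ∑ j, d i j = 1) ∧ (∀ j, ∑ i, d i j = 1)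

/-- The quantum channel induced by a (doubly) stochastic matrix. -/
def dsChannel {m : ℕ} (d : Matrix (Fin m) (Fin m) ℝ) : Mat m → Mat m :=
  fun ρ => Matrix.of fun x x' => if x = x' then ∑ y, (d x y : ℂ) * ρ y y else 0

/-- Diagonal bipartite state associated with a joint probability matrix. -/
def classicalState {m n : ℕ} (P : Matrix (Fin m) (Fin n) ℝ) : BMat m n :=
  Matrix.of fun p q => if p = q then (P p.1 p.2 : ℂ) else 0

/-- von Neumann entropy `S(ρ) = -Σ λ_i log₂ λ_i`. -/
def vnEntropy {ι : Type} [Fintype ι] [DecidableEq ι] (ρ : Matrix ι ι ℂ) : ℝ :=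
  if h : ρ.IsHermitian then -∑ i, h.eigenvalues i * Real.logb 2 (h.eigenvalues i) else 0

/-- von Neumann conditional entropy `H(A|B) = S(ρ_AB) - S(ρ_B)`. -/
def condVN {a b : ℕ} (ρ : BMat a b) : ℝ := vnEntropy ρ - vnEntropy (ptraceA ρ)

/-- Classical game reward for a classical bipartite state with joint distribution `q`
(`y` on `A`, `z` on `B`). -/
def ProbTstate {a b c : ℕ} (T : Matrix (Fin a) (Fin c) ℝ)
    (q : Matrix (Fin a) (Fin b) ℝ) : ℝ :=
  ∑ z, ⨆ z' : Fin c, ∑ w, T w z' * sumTopK (w.1 + 1) (fun y => q y z)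


/-!
Fix an input `σ` of `M` and let `g₀ ≥ g₁ ≥ ⋯` be the eigenvalues of `M σ`, padded by zeros.
Consider the game with one-dimensional reference systems in which the Ky Fan `(x+1)`-norm carries
the weight `(gₓ - gₓ₊₁) / g₀`. By Abel summation, an output state with eigenvalues
`u₀ ≥ u₁ ≥ ⋯` earns `∑ⱼ gⱼ uⱼ / g₀` in this game. Preparing `σ`, the channel `M` earns
`∑ⱼ gⱼ² / g₀ = Tr[(M σ)²] / g₀`, whereas by `2 gⱼ uⱼ ≤ gⱼ² + uⱼ²` every output of `N` earns at most
`(Tr[(M σ)²] + P_N) / (2 g₀)`, where `P_N` is the maximal output purity of `N`. Game majorization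
compares the two rewards, and this gives `Tr[(M σ)²] ≤ P_N`.
-/

def padZero {d : ℕ} (f : Fin d → ℝ) (j : ℕ) : ℝ :=
  if h : j < d then f ⟨j, h⟩ else 0

lemma padZero_of_le {d : ℕ} (f : Fin d → ℝ) {j : ℕ} (hj : d ≤ j) : padZero f j = 0 :=
  dif_neg (by omega)

lemma padZero_nonneg {d : ℕ} {f : Fin d → ℝ} (hf : ∀ i, 0 ≤ f i) (j : ℕ) : 0 ≤ padZero f j := by
  unfold padZero
  split_ifs
  exacts [hf _, le_rfl]

lemma antitone_padZero {d : ℕ} {f : Fin d → ℝ} (hf : Antitone f) (hf0 : ∀ i, 0 ≤ f i) :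
    Antitone (padZero f) := by
  intro i j hij
  unfold padZero
  split_ifs with hj hi hi
  · exact hf (Fin.mk_le_mk.mpr hij)
  · omega
  · exact hf0 _
  · exact le_rfl

lemma sum_range_padZero {d : ℕ} (f : Fin d → ℝ) (G : ℝ → ℝ) :
    ∑ j ∈ Finset.range d, G (padZero f j) = ∑ i, G (f i) := by
  rw [← Fin.sum_univ_eq_sum_range]
  exact Finset.sum_congr rfl fun i _ => by simp [padZero]

lemma sum_range_le_sum_range_of_eq_zero {f : ℕ → ℝ} {c : ℕ} (hf : ∀ j, 0 ≤ f j)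
    (hc : ∀ j, c ≤ j → f j = 0) (K : ℕ) :
    ∑ j ∈ Finset.range K, f j ≤ ∑ j ∈ Finset.range c, f j := by
  rcases le_total K c with hKc | hcK
  · exact Finset.sum_le_sum_of_subset_of_nonneg (Finset.range_subset_range.mpr hKc)
      fun j _ _ => hf j
  · refine (Finset.sum_subset (Finset.range_subset_range.mpr hcK) fun j _ hj => ?_).ge
    exact hc j (by simpa using hj)

/-- Exchange argument: the indices of `S` at or beyond `k` are at most as many as the indices
below `k` missing from `S`, and `g` is smaller on the former than on the latter. -/
lemma Antitone.sum_le_sum_range {g : ℕ → ℝ} (hg : Antitone g) (hg0 : ∀ j, 0 ≤ g j)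
    {S : Finset ℕ} {k : ℕ} (hS : S.card ≤ k) :
    ∑ j ∈ S, g j ≤ ∑ j ∈ Finset.range k, g j := by
  set T := Finset.range k
  have hcard : (S \ T).card ≤ (T \ S).card :=
    Finset.card_sdiff_le_card_sdiff_iff.mpr (by simpa [T] using hS)
  have hout : ∑ j ∈ S \ T, g j ≤ (S \ T).card • g k :=
    Finset.sum_le_card_nsmul _ _ _ fun j hj => hg (by simpa [T] using (Finset.mem_sdiff.mp hj).2)
  have hin : (T \ S).card • g k ≤ ∑ j ∈ T \ S, g j :=
    Finset.card_nsmul_le_sum _ _ _ fun j hj =>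
      hg (Finset.mem_range.mp (Finset.mem_sdiff.mp hj).1).le
  exact Finset.sum_sdiff_le_sum_sdiff.mp
    (hout.trans ((nsmul_le_nsmul_left (hg0 k) hcard).trans hin))

section SumTopK

variable {ι κ : Type} [Fintype ι] [DecidableEq ι] [Fintype κ] [DecidableEq κ]

lemma le_sumTopK {k : ℕ} (f : ι → ℝ) {S : Finset ι} (hS : S.card ≤ k) :
    ∑ i ∈ S, f i ≤ sumTopK k f :=
  Finset.le_sup' (fun s => ∑ i ∈ s, f i) (by simpa using hS)

lemma sumTopK_le {k : ℕ} {f : ι → ℝ} {c : ℝ}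
    (h : ∀ S : Finset ι, S.card ≤ k → ∑ i ∈ S, f i ≤ c) : sumTopK k f ≤ c :=
  Finset.sup'_le _ _ fun S hS => h S (Finset.mem_filter.mp hS).2

lemma sumTopK_comp_equiv_le (k : ℕ) (f : κ → ℝ) (e : ι ≃ κ) :
    sumTopK k (f ∘ e) ≤ sumTopK k f :=
  sumTopK_le fun S hS => by
    rw [show ∑ i ∈ S, (f ∘ e) i = ∑ i ∈ S.map e.toEmbedding, f i by simp]
    exact le_sumTopK f (by simpa using hS)

lemma sumTopK_comp_equiv (k : ℕ) (f : κ → ℝ) (e : ι ≃ κ) :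
    sumTopK k (f ∘ e) = sumTopK k f := by
  refine (sumTopK_comp_equiv_le k f e).antisymm ?_
  simpa [Function.comp_def] using sumTopK_comp_equiv_le k (f ∘ e) e.symm

end SumTopK

lemma sumTopK_eq_sum_range_padZero {d k : ℕ} {f : Fin d → ℝ} (hf : Antitone f)
    (hf0 : ∀ i, 0 ≤ f i) : sumTopK k f = ∑ j ∈ Finset.range k, padZero f j := by
  have hsum (S : Finset (Fin d)) : ∑ i ∈ S, f i = ∑ j ∈ S.map Fin.valEmbedding, padZero f j := by
    simp [padZero]
  refine le_antisymm (sumTopK_le fun S hS => ?_) ?_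
  · rw [hsum]
    exact (antitone_padZero hf hf0).sum_le_sum_range (padZero_nonneg hf0) (by simpa using hS)
  · set S := Finset.univ.filter fun i : Fin d => i.val < k
    have hS : S.map Fin.valEmbedding = Finset.range (min k d) := by
      ext j
      simp only [S, Finset.mem_map, Finset.mem_filter, Finset.mem_univ, true_and,
        Fin.valEmbedding_apply, Finset.mem_range]
      exact ⟨fun ⟨i, hi, hij⟩ => by omega, fun hj => ⟨⟨j, by omega⟩, show j < k by omega, rfl⟩⟩
    have hcard : S.card ≤ k := by
      rw [← Finset.card_map Fin.valEmbedding, hS, Finset.card_range]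
      exact min_le_left k d
    refine le_of_eq_of_le ?_ (le_sumTopK f hcard)
    rw [hsum, hS]
    exact (Finset.sum_subset (Finset.range_subset_range.mpr (min_le_left k d))
      fun j hjk hj => padZero_of_le f (by simp at hjk hj; omega)).symm

def purity {ι : Type} [Fintype ι] (X : Matrix ι ι ℂ) : ℝ := (X * X).trace.re

lemma IsDensity.posSemidef {ι : Type} [Fintype ι] {X : Matrix ι ι ℂ} (hX : IsDensity X) :
    X.PosSemidef :=
  hX.1

section Spectrum

variable {ι : Type} [Fintype ι] [DecidableEq ι] {X : Matrix ι ι ℂ}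

def Matrix.IsHermitian.sortedEigenvalues (hX : X.IsHermitian) : ℕ → ℝ :=
  padZero hX.eigenvalues₀

lemma Matrix.IsHermitian.sortedEigenvalues_of_le (hX : X.IsHermitian) {j : ℕ}
    (hj : Fintype.card ι ≤ j) : hX.sortedEigenvalues j = 0 :=
  padZero_of_le _ hj

lemma Matrix.IsHermitian.sum_range_card_sortedEigenvalues (hX : X.IsHermitian) (G : ℝ → ℝ) :
    ∑ j ∈ Finset.range (Fintype.card ι), G (hX.sortedEigenvalues j) =
      ∑ i, G (hX.eigenvalues i) := by
  rw [sortedEigenvalues, sum_range_padZero]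
  exact (Equiv.sum_comp (Fintype.equivOfCardEq (Fintype.card_fin _)).symm _).symm

lemma Matrix.IsHermitian.purity_eq_sum_sq (hX : X.IsHermitian) :
    purity X = ∑ i, hX.eigenvalues i ^ 2 := by
  have htr : (X * X).trace = ∑ i, ((hX.eigenvalues i ^ 2 : ℝ) : ℂ) := by
    conv_lhs => rw [hX.spectral_theorem, ← map_mul, Unitary.conjStarAlgAut_apply,
      Matrix.trace_mul_cycle, Unitary.coe_star_mul_self, one_mul]
    simp [diagonal_mul_diagonal, trace_diagonal, sq]
  rw [purity, htr, ← Complex.ofReal_sum, Complex.ofReal_re]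

lemma Matrix.IsHermitian.purity_nonneg (hX : X.IsHermitian) : 0 ≤ purity X := by
  rw [hX.purity_eq_sum_sq]
  positivity

lemma Matrix.PosSemidef.eigenvalues₀_nonneg (hX : X.PosSemidef) (j : Fin (Fintype.card ι)) :
    0 ≤ hX.isHermitian.eigenvalues₀ j := by
  simpa [Matrix.IsHermitian.eigenvalues] using
    hX.eigenvalues_nonneg ((Fintype.equivOfCardEq (Fintype.card_fin _)) j)

lemma Matrix.PosSemidef.sortedEigenvalues_nonneg (hX : X.PosSemidef) (j : ℕ) :
    0 ≤ hX.isHermitian.sortedEigenvalues j :=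
  padZero_nonneg hX.eigenvalues₀_nonneg j

lemma Matrix.PosSemidef.antitone_sortedEigenvalues (hX : X.PosSemidef) :
    Antitone hX.isHermitian.sortedEigenvalues :=
  antitone_padZero hX.isHermitian.eigenvalues₀_antitone hX.eigenvalues₀_nonneg

lemma Matrix.PosSemidef.kyFan_eq_sum_range (hX : X.PosSemidef) (k : ℕ) :
    kyFan k X = ∑ j ∈ Finset.range k, hX.isHermitian.sortedEigenvalues j := by
  rw [kyFan, dif_pos hX.isHermitian]
  exact (sumTopK_comp_equiv k _ _).trans
    (sumTopK_eq_sum_range_padZero hX.isHermitian.eigenvalues₀_antitone hX.eigenvalues₀_nonneg)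

lemma Matrix.PosSemidef.sum_range_sq_sortedEigenvalues_le (hX : X.PosSemidef) (K : ℕ) :
    ∑ j ∈ Finset.range K, hX.isHermitian.sortedEigenvalues j ^ 2 ≤ purity X := by
  rw [hX.isHermitian.purity_eq_sum_sq,
    ← hX.isHermitian.sum_range_card_sortedEigenvalues fun t => t ^ 2]
  exact sum_range_le_sum_range_of_eq_zero (fun j => sq_nonneg _)
    (fun j hj => by simp [hX.isHermitian.sortedEigenvalues_of_le hj]) K

lemma Matrix.PosSemidef.two_mul_sum_range_mul_sortedEigenvalues_le {κ : Type} [Fintype κ]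
    [DecidableEq κ] {Y : Matrix κ κ ℂ} (hX : X.PosSemidef) (hY : Y.PosSemidef) (K : ℕ) :
    2 * ∑ j ∈ Finset.range K,
        hX.isHermitian.sortedEigenvalues j * hY.isHermitian.sortedEigenvalues j ≤
      purity X + purity Y := by
  refine le_trans ?_ (add_le_add (hX.sum_range_sq_sortedEigenvalues_le K)
    (hY.sum_range_sq_sortedEigenvalues_le K))
  rw [Finset.mul_sum, ← Finset.sum_add_distrib]
  exact Finset.sum_le_sum fun j _ => by rw [← mul_assoc]; exact two_mul_le_add_sq _ _

lemma Matrix.PosSemidef.sum_range_card_mul_self_sortedEigenvalues (hX : X.PosSemidef) :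
    ∑ j ∈ Finset.range (Fintype.card ι),
        hX.isHermitian.sortedEigenvalues j * hX.isHermitian.sortedEigenvalues j = purity X := by
  simpa [sq] using (hX.isHermitian.sum_range_card_sortedEigenvalues fun t => t ^ 2).trans
    hX.isHermitian.purity_eq_sum_sq.symm

lemma IsDensity.sum_eigenvalues (hX : IsDensity X) :
    ∑ i, hX.posSemidef.isHermitian.eigenvalues i = 1 := by
  have := congrArg Complex.re (hX.posSemidef.isHermitian.trace_eq_sum_eigenvalues.symm.trans hX.2)
  simpa using this

lemma IsDensity.sum_range_card_sortedEigenvalues (hX : IsDensity X) :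
    ∑ j ∈ Finset.range (Fintype.card ι), hX.posSemidef.isHermitian.sortedEigenvalues j = 1 :=
  (hX.posSemidef.isHermitian.sum_range_card_sortedEigenvalues id).trans hX.sum_eigenvalues

lemma IsDensity.sortedEigenvalues_zero_pos (hX : IsDensity X) :
    0 < hX.posSemidef.isHermitian.sortedEigenvalues 0 := by
  by_contra! h
  have := Finset.sum_nonpos fun j (_ : j ∈ Finset.range (Fintype.card ι)) =>
    (hX.posSemidef.antitone_sortedEigenvalues (Nat.zero_le j)).trans h
  linarith [hX.sum_range_card_sortedEigenvalues]

lemma IsDensity.kyFan_le_one (hX : IsDensity X) (k : ℕ) : kyFan k X ≤ 1 := by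
  rw [hX.posSemidef.kyFan_eq_sum_range, ← hX.sum_range_card_sortedEigenvalues]
  exact sum_range_le_sum_range_of_eq_zero hX.posSemidef.sortedEigenvalues_nonneg
    (fun j hj => hX.posSemidef.isHermitian.sortedEigenvalues_of_le hj) k

lemma IsDensity.purity_le_one (hX : IsDensity X) : purity X ≤ 1 := by
  set ev := hX.posSemidef.isHermitian.eigenvalues
  have hev0 : ∀ i, 0 ≤ ev i := hX.posSemidef.eigenvalues_nonneg
  have hev1 (i) : ev i ≤ 1 :=
    (Finset.single_le_sum (fun j _ => hev0 j) (Finset.mem_univ i)).trans_eq hX.sum_eigenvalues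
  rw [hX.posSemidef.isHermitian.purity_eq_sum_sq, ← hX.sum_eigenvalues]
  exact Finset.sum_le_sum fun i _ => by nlinarith [hev0 i, hev1 i]

lemma isDensity_one_of_card_eq_one (h : Fintype.card ι = 1) : IsDensity (1 : Matrix ι ι ℂ) :=
  ⟨Matrix.PosSemidef.one, by simp [Matrix.trace_one, h]⟩

end Spectrum

section Unique

variable {α β : Type} [Fintype α] [Fintype β] [Unique β]

lemma trace_submatrix_fst (X : Matrix α α ℂ) :
    (X.submatrix (Prod.fst : α × β → α) Prod.fst).trace = X.trace := by
  simp [Matrix.trace, Fintype.sum_prod_type]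

lemma purity_submatrix_fst (X : Matrix α α ℂ) :
    purity (X.submatrix (Prod.fst : α × β → α) Prod.fst) = purity X := by
  rw [purity, ← Equiv.coe_prodUnique, Matrix.submatrix_mul_equiv, Equiv.coe_prodUnique,
    trace_submatrix_fst, purity]

lemma IsDensity.submatrix_fst {X : Matrix α α ℂ} (hX : IsDensity X) :
    IsDensity (X.submatrix (Prod.fst : α × β → α) Prod.fst) :=
  ⟨hX.1.submatrix _, (trace_submatrix_fst X).trans hX.2⟩

end Unique

section Channels

variable {ι κ : Type} [Fintype ι] [DecidableEq ι] {Φ : Matrix ι ι ℂ → Matrix κ κ ℂ}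

lemma IsLinearMap.apply_eq_sum_choi (hΦ : IsLinearMap ℂ Φ) (X : Matrix ι ι ℂ) (b b' : κ) :
    Φ X b b' = ∑ i, ∑ j, X i j * choi Φ (i, b) (j, b') := by
  let L := IsLinearMap.mk' Φ hΦ
  have hL : Φ X = ∑ i, ∑ j, X i j • Φ (Matrix.single i j 1) := by
    change L X = ∑ i, ∑ j, X i j • L (Matrix.single i j 1)
    conv_lhs => rw [Matrix.matrix_eq_sum_single X]
    simp only [map_sum]
    refine Finset.sum_congr rfl fun i _ => Finset.sum_congr rfl fun j _ => ?_
    rw [← L.map_smul, Matrix.smul_single, smul_eq_mul, mul_one]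
  simp [hL, Matrix.sum_apply, choi]

lemma IsLinearMap.map_vecMulVec_eq [Fintype κ] (hΦ : IsLinearMap ℂ Φ) (v : ι → ℂ) :
    Φ (vecMulVec v (star v)) =
      (Matrix.of fun (p : ι × κ) (b : κ) => if p.2 = b then star (v p.1) else 0)ᴴ * choi Φ *
        Matrix.of fun (p : ι × κ) (b : κ) => if p.2 = b then star (v p.1) else 0 := by
  ext b b'
  rw [hΦ.apply_eq_sum_choi]
  simp only [Matrix.mul_apply, Matrix.conjTranspose_apply, Matrix.of_apply, vecMulVec_apply,
    Fintype.sum_prod_type, apply_ite star, star_star, star_zero, ite_mul, zero_mul, mul_ite,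
    mul_zero, Finset.sum_ite_eq', Finset.mem_univ, if_true, Finset.sum_mul, Pi.star_apply]
  rw [Finset.sum_comm]
  refine Finset.sum_congr rfl fun i _ => Finset.sum_congr rfl fun j _ => ?_
  ring

lemma IsCP.posSemidef_map [Fintype κ] (hΦ : IsCP Φ) {X : Matrix ι ι ℂ} (hX : X.PosSemidef) :
    (Φ X).PosSemidef := by
  obtain ⟨r, v, rfl⟩ := Matrix.posSemidef_iff_eq_sum_vecMulVec.mp hX
  rw [← IsLinearMap.mk'_apply hΦ.1, map_sum]
  exact Matrix.posSemidef_sum _ fun k _ => by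
    rw [IsLinearMap.mk'_apply, hΦ.1.map_vecMulVec_eq]
    exact hΦ.2.conjTranspose_mul_mul_same _

lemma IsCPTP.isDensity_map [Fintype κ] (hΦ : IsCPTP Φ) {X : Matrix ι ι ℂ} (hX : IsDensity X) :
    IsDensity (Φ X) :=
  ⟨IsCP.posSemidef_map ⟨hΦ.1, hΦ.2.2⟩ hX.1, (hΦ.2.1 X).trans hX.2⟩

def replaceChannel (σ : Matrix κ κ ℂ) (X : Matrix ι ι ℂ) : Matrix κ κ ℂ := X.trace • σ

lemma choi_replaceChannel (σ : Matrix κ κ ℂ) :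
    choi (replaceChannel σ : Matrix ι ι ℂ → Matrix κ κ ℂ) = 1 ⊗ₖ σ := by
  ext ⟨i, b⟩ ⟨j, b'⟩
  by_cases hij : i = j
  · simp [choi, replaceChannel, hij, Matrix.trace_single_eq_same]
  · simp [choi, replaceChannel, hij, Matrix.trace_single_eq_of_ne]

lemma isCPTP_replaceChannel [Fintype κ] {σ : Matrix κ κ ℂ} (hσ : IsDensity σ) :
    IsCPTP (replaceChannel σ : Matrix ι ι ℂ → Matrix κ κ ℂ) := by
  refine ⟨⟨fun X Y => ?_, fun c X => ?_⟩, fun X => ?_, ?_⟩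
  · simp [replaceChannel, Matrix.trace_add, add_smul]
  · simp [replaceChannel, Matrix.trace_smul, smul_smul]
  · simp [replaceChannel, Matrix.trace_smul, hσ.2]
  · rw [choi_replaceChannel]
    exact Matrix.PosSemidef.one.kronecker hσ.1

def maxOutputPurity [Fintype κ] (Φ : Matrix ι ι ℂ → Matrix κ κ ℂ) : ℝ :=
  ⨆ ρ : {ρ : Matrix ι ι ℂ // IsDensity ρ}, purity (Φ ρ.1)

lemma maxOutputPurity_nonneg [Fintype κ] [DecidableEq κ] (hΦ : IsCPTP Φ) :
    0 ≤ maxOutputPurity Φ :=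
  Real.iSup_nonneg fun ρ => (hΦ.isDensity_map ρ.2).posSemidef.isHermitian.purity_nonneg

lemma IsCPTP.purity_map_le_maxOutputPurity [Fintype κ] [DecidableEq κ] (hΦ : IsCPTP Φ)
    {ρ : Matrix ι ι ℂ} (hρ : IsDensity ρ) : purity (Φ ρ) ≤ maxOutputPurity Φ :=
  le_ciSup (f := fun ρ : {ρ : Matrix ι ι ℂ // IsDensity ρ} => purity (Φ ρ.1))
    ⟨1, by rintro _ ⟨ρ, rfl⟩; exact (hΦ.isDensity_map ρ.2).purity_le_one⟩ ⟨ρ, hρ⟩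

end Channels

lemma lTensorId_one {α α' β : Type} [DecidableEq α] [DecidableEq β] [Subsingleton β]
    (Φ : Matrix α α ℂ → Matrix α' α' ℂ) :
    lTensorId Φ (1 : Matrix (α × β) (α × β) ℂ) = (Φ 1).submatrix Prod.fst Prod.fst := by
  ext p q
  have h1 : (fun k k' => (1 : Matrix (α × β) (α × β) ℂ) (k, p.2) (k', q.2)) =
      (1 : Matrix α α ℂ) := by
    ext k k'
    rw [Subsingleton.elim p.2 q.2]
    simp only [Matrix.one_apply, Prod.mk.injEq, and_true]
  simp only [lTensorId, h1, Matrix.submatrix_apply]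

section TrivialReference

variable {n m ℓ : ℕ} {Φ : Mat n → Mat m} {p : Fin ℓ → ℝ}

lemma le_Rch_one (hΦ : IsCPTP Φ) (hp : ∀ x, 0 ≤ p x) {σ : Mat n} (hσ : IsDensity σ) :
    ∑ x, p x * kyFan (x + 1) ((Φ σ).submatrix Prod.fst Prod.fst : BMat m 1) ≤
      Rch Φ p (fun _ => (1 : BMat 1 1)) := by
  have hbdd : BddAbove (Set.range fun E : {E : Mat 1 → Mat n // IsCPTP E} =>
      ∑ x, p x * kyFan (x + 1) (lTensorId (fun Y => Φ (E.1 Y)) (1 : BMat 1 1))) := by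
    refine ⟨∑ x, p x, ?_⟩
    rintro _ ⟨E, rfl⟩
    refine Finset.sum_le_sum fun x _ => mul_le_of_le_one_right (hp x) ?_
    rw [lTensorId_one]
    exact (hΦ.isDensity_map (E.2.isDensity_map (isDensity_one_of_card_eq_one rfl))).submatrix_fst
      |>.kyFan_le_one _
  refine le_of_eq_of_le ?_ (le_ciSup hbdd ⟨replaceChannel σ, isCPTP_replaceChannel hσ⟩)
  simp [lTensorId_one, replaceChannel]

lemma Rch_one_le {c : ℝ} (hc : 0 ≤ c) (h : ∀ σ : Mat n, IsDensity σ →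
      ∑ x, p x * kyFan (x + 1) ((Φ σ).submatrix Prod.fst Prod.fst : BMat m 1) ≤ c) :
    Rch Φ p (fun _ => (1 : BMat 1 1)) ≤ c :=
  Real.iSup_le (fun E => by
    simp only [lTensorId_one]
    exact h _ (E.2.isDensity_map (isDensity_one_of_card_eq_one rfl))) hc

end TrivialReference

lemma sum_range_sub_mul_sum_range (g u : ℕ → ℝ) (m : ℕ) :
    ∑ x ∈ Finset.range m, (g x - g (x + 1)) * ∑ j ∈ Finset.range (x + 1), u j =
      ∑ j ∈ Finset.range m, (g j - g m) * u j := by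
  induction m with
  | zero => simp
  | succ m ih =>
    rw [Finset.sum_range_succ, ih, Finset.sum_range_succ u m, Finset.sum_range_succ _ m, mul_add,
      Finset.mul_sum, ← add_assoc, ← Finset.sum_add_distrib]
    congr 1
    exact Finset.sum_congr rfl fun j _ => by ring

def telescopeWeights (g : ℕ → ℝ) (ℓ : ℕ) (x : Fin ℓ) : ℝ := (g x - g (x + 1)) / g 0

lemma telescopeWeights_nonneg {g : ℕ → ℝ} (hg : Antitone g) (hg0 : 0 ≤ g 0) {ℓ : ℕ}
    (x : Fin ℓ) : 0 ≤ telescopeWeights g ℓ x :=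
  div_nonneg (sub_nonneg.mpr (hg (Nat.le_succ _))) hg0

lemma sum_telescopeWeights {g : ℕ → ℝ} (hg0 : g 0 ≠ 0) {ℓ : ℕ} (hgℓ : g ℓ = 0) :
    ∑ x, telescopeWeights g ℓ x = 1 := by
  unfold telescopeWeights
  rw [Fin.sum_univ_eq_sum_range (fun x => (g x - g (x + 1)) / g 0), ← Finset.sum_div,
    Finset.sum_range_sub', hgℓ, sub_zero, div_self hg0]

lemma sum_telescopeWeights_mul_kyFan {ι : Type} [Fintype ι] [DecidableEq ι] {g : ℕ → ℝ} {ℓ : ℕ}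
    (hgℓ : g ℓ = 0) {Y : Matrix ι ι ℂ} (hY : Y.PosSemidef) :
    ∑ x, telescopeWeights g ℓ x * kyFan (x + 1) Y =
      (∑ j ∈ Finset.range ℓ, g j * hY.isHermitian.sortedEigenvalues j) / g 0 := by
  simp only [telescopeWeights, hY.kyFan_eq_sum_range, div_mul_eq_mul_div, ← Finset.sum_div]
  rw [Fin.sum_univ_eq_sum_range (fun x => (g x - g (x + 1)) *
      ∑ j ∈ Finset.range (x + 1), hY.isHermitian.sortedEigenvalues j),
    sum_range_sub_mul_sum_range, hgℓ]
  simp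

section PurityGame

variable {ι : Type} [Fintype ι] [DecidableEq ι] {n m : ℕ}

lemma purity_div_le_Rch_telescopeWeights {Φ : Mat n → Mat m} (hΦ : IsCPTP Φ) {σ : Mat n}
    (hσ : IsDensity σ) (hX : ((Φ σ).submatrix Prod.fst Prod.fst : BMat m 1).PosSemidef) :
    purity (Φ σ) / hX.isHermitian.sortedEigenvalues 0 ≤
      Rch Φ (telescopeWeights hX.isHermitian.sortedEigenvalues (Fintype.card (Fin m × Fin 1)))
        (fun _ => (1 : BMat 1 1)) := by
  refine le_of_eq_of_le ?_ (le_Rch_one hΦ (telescopeWeights_nonneg hX.antitone_sortedEigenvalues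
    (hX.sortedEigenvalues_nonneg 0)) hσ)
  rw [sum_telescopeWeights_mul_kyFan (hX.isHermitian.sortedEigenvalues_of_le le_rfl) hX,
    hX.sum_range_card_mul_self_sortedEigenvalues, purity_submatrix_fst]

lemma Rch_telescopeWeights_le {Φ : Mat n → Mat m} (hΦ : IsCPTP Φ) {X : Matrix ι ι ℂ}
    (hX : X.PosSemidef) (hX0 : 0 < hX.isHermitian.sortedEigenvalues 0) :
    Rch Φ (telescopeWeights hX.isHermitian.sortedEigenvalues (Fintype.card ι))
        (fun _ => (1 : BMat 1 1)) ≤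
      (purity X + maxOutputPurity Φ) / (2 * hX.isHermitian.sortedEigenvalues 0) := by
  refine Rch_one_le (div_nonneg (add_nonneg hX.isHermitian.purity_nonneg
    (maxOutputPurity_nonneg hΦ)) (by positivity)) fun σ hσ => ?_
  have hY := (hΦ.isDensity_map hσ).submatrix_fst (β := Fin 1)
  rw [sum_telescopeWeights_mul_kyFan (hX.isHermitian.sortedEigenvalues_of_le le_rfl)
    hY.posSemidef, div_le_div_iff₀ hX0 (by positivity)]
  have := hX.two_mul_sum_range_mul_sortedEigenvalues_le hY.posSemidef (Fintype.card ι)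
  rw [purity_submatrix_fst] at this
  nlinarith [hΦ.purity_map_le_maxOutputPurity hσ]

end PurityGame

theorem purity_monotone_general {nM m nN m' : ℕ}
    (M : Mat nM → Mat m) (N : Mat nN → Mat m') (hM : IsCPTP M) (hN : IsCPTP N)
    (hmaj : ∀ (dA b ℓ : ℕ) (p : Fin ℓ → ℝ) (ρx : Fin ℓ → BMat dA b),
        (∀ x, 0 ≤ p x) → (∑ x, p x) = 1 → (∀ x, IsDensity (ρx x)) →
        Rch M p ρx ≤ Rch N p ρx) :
    (⨆ ρ : {ρ : Mat nM // IsDensity ρ}, (Matrix.trace (M ρ.1 * M ρ.1)).re) ≤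
      ⨆ ρ : {ρ : Mat nN // IsDensity ρ}, (Matrix.trace (N ρ.1 * N ρ.1)).re := by
  change maxOutputPurity M ≤ maxOutputPurity N
  refine Real.iSup_le (fun ⟨σ, hσ⟩ => ?_) (maxOutputPurity_nonneg hN)
  have hX := (hM.isDensity_map hσ).submatrix_fst (β := Fin 1)
  set g := hX.posSemidef.isHermitian.sortedEigenvalues
  have hg0 : 0 < g 0 := hX.sortedEigenvalues_zero_pos
  have hgame := hmaj 1 1 _ (telescopeWeights g _) (fun _ => 1)
    (telescopeWeights_nonneg hX.posSemidef.antitone_sortedEigenvalues hg0.le)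
    (sum_telescopeWeights hg0.ne' (hX.posSemidef.isHermitian.sortedEigenvalues_of_le le_rfl))
    (fun _ => isDensity_one_of_card_eq_one rfl)
  have key := (purity_div_le_Rch_telescopeWeights hM hσ hX.posSemidef).trans
    (hgame.trans (Rch_telescopeWeights_le hN hX.posSemidef hg0))
  rw [purity_submatrix_fst, div_le_div_iff₀ hg0 (by positivity)] at key
  nlinarith

/-- maximal output purity is monotone under channel game-majorization. -/
theorem purity_monotone {nM m nN m' : ℕ} (hnM : 0 < nM) (hnN : 0 < nN)
    (M : Mat nM → Mat m) (N : Mat nN → Mat m') (hM : IsCPTP M) (hN : IsCPTP N)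
    (hmaj : ∀ (dA b ℓ : ℕ) (p : Fin ℓ → ℝ) (ρx : Fin ℓ → BMat dA b),
        (∀ x, 0 ≤ p x) → (∑ x, p x) = 1 → (∀ x, IsDensity (ρx x)) →
        Rch M p ρx ≤ Rch N p ρx) :
    (⨆ ρ : {ρ : Mat nM // IsDensity ρ}, (Matrix.trace (M ρ.1 * M ρ.1)).re) ≤
      ⨆ ρ : {ρ : Mat nN // IsDensity ρ}, (Matrix.trace (N ρ.1 * N ρ.1)).re :=
  purity_monotone_general M N hM hN hmaj
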